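/- If a polynomial f ∈ F[x] can be written as ∑_{i=1}^s α_i (x - a_i)^{e_i} with α_i, a_i ∈ F and e_i ∈ ℕ, then f satisfies a shifted differential equation of order 2s - 1 and shift 0, i.e., there exist polynomials P_0, ..., P_{2s-1}, not all zero, with deg(P_k) ≤ k, such that ∑_{k=0}^{2s-1} P_k(x) f^{(k)}(x) = 0. -/

import Mathlib

/-!
Every `g = (X - a)^e` satisfies `q * g^{(k)} ∈ span {(X - a)^(e - t) | t ≤ k}` whenever
`deg q ≤ k`: the derivative is a multiple of `(X - a)^(e - k)`, and expanding `q` in powers of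
`X - a` raises the exponent by at most `k`. Hence for `f = ∑ α_i (X - a_i)^{e_i}` all the products
`q * f^{(k)}` with `k < 2s`, `deg q ≤ k` lie in a space of dimension at most `s · 2s`, while the
tuples `(P_0, …, P_{2s-1})` with `deg P_k ≤ k` form a space of dimension `s (2s + 1)`. The linear
map `(P_k) ↦ ∑ P_k f^{(k)}` therefore has a nonzero kernel.
-/

open Polynomial Module

section Taylor

variable {R : Type*} [CommRing R]

theorem X_sub_C_pow_mul_iterate_derivative_mem_span (c : R) (m : ℕ) {r k : ℕ} (hr : r ≤ k) :
    (X - C c) ^ r * derivative^[k] ((X - C c) ^ m) ∈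
      Submodule.span R (Set.range fun t : Fin (k + 1) => (X - C c) ^ (m - t)) := by
  rw [iterate_derivative_X_sub_pow, mul_smul_comm]
  rcases lt_or_ge m k with hmk | hkm
  · simp [Nat.descFactorial_eq_zero_iff_lt.mpr hmk]
  · rw [← pow_add, show r + (m - k) = m - (k - r) by omega]
    exact Submodule.smul_of_tower_mem _ _ (Submodule.subset_span ⟨⟨k - r, by omega⟩, rfl⟩)

theorem mul_iterate_derivative_X_sub_C_pow_mem_span (c : R) (m : ℕ) {k : ℕ} {q : R[X]}
    (hq : q.natDegree ≤ k) :
    q * derivative^[k] ((X - C c) ^ m) ∈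
      Submodule.span R (Set.range fun t : Fin (k + 1) => (X - C c) ^ (m - t)) := by
  rw [← sum_taylor_eq q c, Polynomial.sum, Finset.sum_mul]
  refine Submodule.sum_mem _ fun r hr => ?_
  have hrk : r ≤ k := (le_natDegree_of_mem_supp r hr).trans ((natDegree_taylor q c).trans_le hq)
  rw [mul_assoc, ← smul_eq_C_mul]
  exact Submodule.smul_mem _ _ (X_sub_C_pow_mul_iterate_derivative_mem_span c m hrk)

theorem mul_iterate_derivative_sum_mem_span {ι : Type*} [Fintype ι] (α a : ι → R) (e : ι → ℕ)
    {n k : ℕ} (hk : k < n) {q : R[X]} (hq : q.natDegree ≤ k) :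
    q * derivative^[k] (∑ i, C (α i) * (X - C (a i)) ^ e i) ∈
      Submodule.span R (Set.range fun p : ι × Fin n => (X - C (a p.1)) ^ (e p.1 - p.2)) := by
  rw [iterate_derivative_sum, Finset.mul_sum]
  refine Submodule.sum_mem _ fun i _ => ?_
  rw [iterate_derivative_C_mul, mul_left_comm, ← smul_eq_C_mul]
  refine Submodule.smul_mem _ _ (Submodule.span_mono ?_
    (mul_iterate_derivative_X_sub_C_pow_mem_span (a i) (e i) hq))
  rintro _ ⟨t, rfl⟩
  exact ⟨(i, ⟨t, by omega⟩), rfl⟩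

end Taylor

section DimensionCount

variable {F : Type*} [Field F]

theorem finrank_degreeLT (n : ℕ) : finrank F F[X]_n = n := by
  rw [finrank_eq_card_basis (degreeLT.basis F n), Fintype.card_fin]

theorem mem_degreeLT_add_one_iff {p : F[X]} {n : ℕ} : p ∈ F[X]_(n + 1) ↔ p.natDegree ≤ n := by
  rw [degreeLT_succ_eq_degreeLE, mem_degreeLE, natDegree_le_iff_degree_le]

noncomputable def sdeOperator (f : F[X]) (n l : ℕ) :
    ((k : Fin n) → F[X]_((k : ℕ) + l + 1)) →ₗ[F] F[X] :=
  ∑ k : Fin n, LinearMap.mulRight F (derivative^[k] f) ∘ₗ Submodule.subtype _ ∘ₗ LinearMap.proj k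

theorem sdeOperator_apply (f : F[X]) (n l : ℕ) (P : (k : Fin n) → F[X]_((k : ℕ) + l + 1)) :
    sdeOperator f n l P = ∑ k, (P k : F[X]) * derivative^[k] f := by
  simp [sdeOperator]

theorem exists_sde_of_finrank_lt (f : F[X]) {n l : ℕ} (V : Submodule F F[X])
    [FiniteDimensional F V]
    (hV : ∀ (k : Fin n) (q : F[X]), q.natDegree ≤ k + l → q * derivative^[k] f ∈ V)
    (hrank : finrank F V < ∑ k : Fin n, ((k : ℕ) + l + 1)) :
    ∃ P : Fin n → F[X], P ≠ 0 ∧ (∀ k, (P k).natDegree ≤ k + l) ∧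
      ∑ k, P k * derivative^[k] f = 0 := by
  have hmemV : ∀ P, sdeOperator f n l P ∈ V := fun P => by
    rw [sdeOperator_apply]
    exact Submodule.sum_mem _ fun k _ => hV k _ (mem_degreeLT_add_one_iff.mp (P k).2)
  have hker : LinearMap.ker ((sdeOperator f n l).codRestrict V hmemV) ≠ ⊥ := by
    refine LinearMap.ker_ne_bot_of_finrank_lt ?_
    simpa only [finrank_pi_fintype, finrank_degreeLT] using hrank
  obtain ⟨P, hP, hP0⟩ := Submodule.exists_mem_ne_zero_of_ne_bot hker
  refine ⟨fun k => P k, fun h => hP0 (funext fun k => Subtype.ext (congrFun h k)),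
    fun k => mem_degreeLT_add_one_iff.mp (P k).2, ?_⟩
  rwa [LinearMap.mem_ker, ← Subtype.coe_inj, LinearMap.codRestrict_apply, sdeOperator_apply] at hP

end DimensionCount

theorem sum_fin_add_one_mul_two (n : ℕ) : (∑ k : Fin n, ((k : ℕ) + 1)) * 2 = (n + 1) * n := by
  have h := Finset.sum_range_id_mul_two (n + 1)
  rw [Finset.sum_range_succ', add_zero, Nat.add_sub_cancel] at h
  rwa [Fin.sum_univ_eq_sum_range (· + 1)]

theorem stmt4_general {F : Type*} [Field F] {s : ℕ} (hs : 0 < s)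
    (α a : Fin s → F) (e : Fin s → ℕ) (f : F[X])
    (hf : f = ∑ i, C (α i) * (X - C (a i)) ^ e i) :
    ∃ P : Fin (2 * s) → F[X], P ≠ 0 ∧ (∀ k, (P k).natDegree ≤ (k : ℕ)) ∧
      ∑ k, P k * derivative^[(k : ℕ)] f = 0 := by
  let V := Submodule.span F
    (Set.range fun p : Fin s × Fin (2 * s) => (X - C (a p.1)) ^ (e p.1 - p.2))
  have : FiniteDimensional F V := FiniteDimensional.span_of_finite F (Set.finite_range _)
  have hdimV : finrank F V ≤ s * (2 * s) := by
    simpa only [Set.finrank, Fintype.card_prod, Fintype.card_fin] using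
      finrank_range_le_card (R := F) fun p : Fin s × Fin (2 * s) => (X - C (a p.1)) ^ (e p.1 - p.2)
  have hmem : ∀ (k : Fin (2 * s)) (q : F[X]), q.natDegree ≤ k + 0 →
      q * derivative^[k] f ∈ V := fun k q hq =>
    hf ▸ mul_iterate_derivative_sum_mem_span α a e k.2 hq
  have hcount := sum_fin_add_one_mul_two (2 * s)
  exact exists_sde_of_finrank_lt f V hmem (by simp only [add_zero]; nlinarith)

theorem stmt4 {F : Type*} [Field F] [CharZero F] {s : ℕ} (hs : 0 < s)
    (α a : Fin s → F) (e : Fin s → ℕ) (f : F[X])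
    (hf : f = ∑ i, C (α i) * (X - C (a i)) ^ e i) :
    ∃ P : Fin (2 * s) → F[X], P ≠ 0 ∧ (∀ k, (P k).natDegree ≤ (k : ℕ)) ∧
      ∑ k, P k * derivative^[(k : ℕ)] f = 0 :=
  stmt4_general hs α a e f hf
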